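/- Define a_1 = 1 and a_n = (2n−1)·a_{n−1} + (n−1)! for n ≥ 2. Then for every n ≥ 1, a_n = (n−1)! · Σ_{k=0}^{n−1} binom(2n−1,2k) / binom(n−1,k). -/

import Mathlib

open Finset

private lemma facR (n : ℕ) : ((n+1).factorial : ℝ) = (n+1) * (n.factorial : ℝ) := by
  push_cast [Nat.factorial_succ]; ring

private lemma facne (n : ℕ) : ((n.factorial : ℝ)) ≠ 0 :=
  Nat.cast_ne_zero.mpr n.factorial_ne_zero

/-- term relation: (2j+3)·C(2(k+j)+3, 2k)·C(k+j, k) = (2(k+j)+3)·C(2(k+j)+1, 2k)·C(k+j+1, k) -/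
private lemma termRel (k j : ℕ) :
    ((2*j+3 : ℕ) : ℝ) * ((2*(k+j)+3).choose (2*k) : ℝ) * ((k+j).choose k : ℝ)
      = ((2*(k+j)+3 : ℕ) : ℝ) * ((2*(k+j)+1).choose (2*k) : ℝ) * ((k+j+1).choose k : ℝ) := by
  rw [Nat.cast_choose ℝ (show 2*k ≤ 2*(k+j)+3 by omega),
      Nat.cast_choose ℝ (show 2*k ≤ 2*(k+j)+1 by omega),
      Nat.cast_choose ℝ (show k ≤ k+j by omega),
      Nat.cast_choose ℝ (show k ≤ k+j+1 by omega),
      show 2*(k+j)+3 - 2*k = 2*j+3 by omega, show 2*(k+j)+1 - 2*k = 2*j+1 by omega,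
      show k+j-k = j by omega, show k+j+1-k = j+1 by omega]
  have e1 : ((2*(k+j)+3).factorial : ℝ)
      = ((2*(k+j)+3 : ℕ) : ℝ) * ((2*(k+j)+2 : ℕ) : ℝ) * ((2*(k+j)+1).factorial : ℝ) := by
    rw [show 2*(k+j)+3 = 2*(k+j)+1+1+1 by ring, Nat.factorial_succ, Nat.factorial_succ]
    push_cast; ring
  have e2 : ((2*j+3).factorial : ℝ)
      = ((2*j+3 : ℕ) : ℝ) * ((2*j+2 : ℕ) : ℝ) * ((2*j+1).factorial : ℝ) := by
    rw [show 2*j+3 = 2*j+1+1+1 by ring, Nat.factorial_succ, Nat.factorial_succ]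
    push_cast; ring
  have e3 : ((k+j+1).factorial : ℝ) = ((k+j+1 : ℕ) : ℝ) * ((k+j).factorial : ℝ) := by rw [Nat.factorial_succ]; push_cast; ring
  have e4 : ((j+1).factorial : ℝ) = ((j+1 : ℕ) : ℝ) * (j.factorial : ℝ) := by rw [Nat.factorial_succ]; push_cast; ring
  rw [e1, e2, e3, e4]
  have h1 := facne (2*k); have h2 := facne (2*j+1); have h3 := facne k; have h4 := facne j
  field_simp
  push_cast; ring

/-- pairing identity -/
private lemma pairRel (i j : ℕ) :
    ((2*i+3 : ℕ) : ℝ) * ((2*(i+j)+5).choose (2*i+4) : ℝ) * ((i+j+2).choose (j+2) : ℝ)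
      = ((2*j+3 : ℕ) : ℝ) * ((2*(i+j)+5).choose (2*j+4) : ℝ) * ((i+j+2).choose (i+2) : ℝ) := by
  rw [Nat.cast_choose ℝ (show 2*i+4 ≤ 2*(i+j)+5 by omega),
      Nat.cast_choose ℝ (show 2*j+4 ≤ 2*(i+j)+5 by omega),
      Nat.cast_choose ℝ (show j+2 ≤ i+j+2 by omega),
      Nat.cast_choose ℝ (show i+2 ≤ i+j+2 by omega),
      show 2*(i+j)+5 - (2*i+4) = 2*j+1 by omega, show 2*(i+j)+5 - (2*j+4) = 2*i+1 by omega,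
      show i+j+2-(j+2) = i by omega, show i+j+2-(i+2) = j by omega]
  have e1 : ((2*i+4).factorial : ℝ)
      = ((2*i+4 : ℕ) : ℝ) * ((2*i+3 : ℕ) : ℝ) * ((2*i+2 : ℕ) : ℝ) * ((2*i+1).factorial : ℝ) := by
    rw [show 2*i+4 = 2*i+1+1+1+1 by ring, Nat.factorial_succ, Nat.factorial_succ,
        Nat.factorial_succ]
    push_cast; ring
  have e2 : ((2*j+4).factorial : ℝ)
      = ((2*j+4 : ℕ) : ℝ) * ((2*j+3 : ℕ) : ℝ) * ((2*j+2 : ℕ) : ℝ) * ((2*j+1).factorial : ℝ) := by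
    rw [show 2*j+4 = 2*j+1+1+1+1 by ring, Nat.factorial_succ, Nat.factorial_succ,
        Nat.factorial_succ]
    push_cast; ring
  have e3 : ((i+2).factorial : ℝ) = ((i+2 : ℕ) : ℝ) * ((i+1 : ℕ) : ℝ) * (i.factorial : ℝ) := by
    rw [show i+2 = i+1+1 by ring, Nat.factorial_succ, Nat.factorial_succ]; push_cast; ring
  have e4 : ((j+2).factorial : ℝ) = ((j+2 : ℕ) : ℝ) * ((j+1 : ℕ) : ℝ) * (j.factorial : ℝ) := by
    rw [show j+2 = j+1+1 by ring, Nat.factorial_succ, Nat.factorial_succ]; push_cast; ring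
  rw [e1, e2, e3, e4]
  have h1 := facne (2*i+1); have h2 := facne (2*j+1); have h3 := facne i; have h4 := facne j
  field_simp
  push_cast; ring

private lemma chooseNe {n k : ℕ} (h : k ≤ n) : ((n.choose k : ℕ) : ℝ) ≠ 0 :=
  Nat.cast_ne_zero.mpr (Nat.choose_pos h).ne'

private lemma sumC (m : ℕ) :
    ∑ k ∈ range (m+1),
        (2*(k:ℝ) - (m:ℝ) - 2) / (2*(m:ℝ) - 2*(k:ℝ) + 3)
          * (((2*m+1).choose (2*k) : ℝ) / ((m.choose k : ℕ) : ℝ))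
      = -(2*((m:ℝ)+1)^2) / (2*(m:ℝ)+3) := by
  rcases m with _ | M
  · norm_num
  -- split range (M+2) = {0,1} ∪ Icc 2 (M+1)
  have hsplit : range (M+1+1) = {0, 1} ∪ Icc 2 (M+1) := by
    ext x
    simp only [mem_range, mem_union, mem_insert, mem_singleton, mem_Icc]
    omega
  have hdisj : Disjoint ({0, 1} : Finset ℕ) (Icc 2 (M+1)) := by
    simp only [Finset.disjoint_left, mem_insert, mem_singleton, mem_Icc]
    omega
  rw [hsplit, Finset.sum_union hdisj]
  have hzero : ∑ k ∈ Icc 2 (M+1),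
      (2*(k:ℝ) - ((M+1 : ℕ):ℝ) - 2) / (2*((M+1 : ℕ):ℝ) - 2*(k:ℝ) + 3)
        * (((2*(M+1)+1).choose (2*k) : ℝ) / (((M+1).choose k : ℕ) : ℝ)) = 0 := by
    refine Finset.sum_involution (fun a _ => M+3-a) ?_ ?_ ?_ ?_
    · intro a ha
      beta_reduce
      simp only [mem_Icc] at ha
      obtain ⟨j, rfl⟩ : ∃ j, a = j+2 := ⟨a-2, by omega⟩
      obtain ⟨i, rfl⟩ : ∃ i, M = j+1+i := ⟨M-1-j, by omega⟩
      rw [show j+1+i+3-(j+2) = i+2 by omega]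
      rw [show (2*(j+1+i+1)+1) = 2*(i+j)+5 by ring, show 2*(j+2) = 2*j+4 by ring,
          show 2*(i+2) = 2*i+4 by ring, show j+1+i+1 = i+j+2 by ring]
      have hp := pairRel i j
      have hB : (((i+j+2).choose (j+2) : ℕ) : ℝ) ≠ 0 := chooseNe (by omega)
      have hD : (((i+j+2).choose (i+2) : ℕ) : ℝ) ≠ 0 := chooseNe (by omega)
      have h1 : (2*(i:ℝ)+3) ≠ 0 := by positivity
      have h2 : (2*(j:ℝ)+3) ≠ 0 := by positivity
      push_cast at hp ⊢
      rw [show 2 * ((i:ℝ) + (j:ℝ) + 2) - 2 * ((j:ℝ) + 2) + 3 = 2*(i:ℝ)+3 by ring,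
          show 2 * ((i:ℝ) + (j:ℝ) + 2) - 2 * ((i:ℝ) + 2) + 3 = 2*(j:ℝ)+3 by ring,
          show 2 * ((j:ℝ) + 2) - ((i:ℝ) + (j:ℝ) + 2) - 2 = (j:ℝ) - i by ring,
          show 2 * ((i:ℝ) + 2) - ((i:ℝ) + (j:ℝ) + 2) - 2 = (i:ℝ) - j by ring]
      field_simp
      linear_combination (((i:ℝ) - (j:ℝ))) * hp
    · intro a ha hfa heq
      beta_reduce at heq
      apply hfa
      simp only [mem_Icc] at ha
      have h2a : 2*a = M+3 := by omega
      have hnum : 2*(a:ℝ) - ((M+1 : ℕ):ℝ) - 2 = 0 := by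
        have : ((2*a : ℕ) : ℝ) = ((M+3 : ℕ) : ℝ) := by exact_mod_cast h2a
        push_cast at this ⊢; linarith
      rw [hnum, zero_div, zero_mul]
    · intro a ha
      simp only [mem_Icc] at ha ⊢
      omega
    · intro a ha
      beta_reduce
      simp only [mem_Icc] at ha
      omega
  rw [hzero]
  -- compute the {0,1} part
  rw [Finset.sum_insert (by norm_num), Finset.sum_singleton]
  have hc2 : (((2*(M+1)+1).choose 2 : ℕ) : ℝ) = (2*(M:ℝ)+3) * ((M:ℝ)+1) := by
    rw [Nat.cast_choose ℝ (show 2 ≤ 2*(M+1)+1 by omega), show 2*(M+1)+1-2 = 2*M+1 by omega,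
        show 2*(M+1)+1 = 2*M+1+1+1 by ring, Nat.factorial_succ, Nat.factorial_succ]
    have := facne (2*M+1)
    push_cast [Nat.factorial_two]
    field_simp
    ring
  rw [show 2*1 = 2 by rfl, hc2, Nat.choose_one_right]
  simp only [Nat.choose_zero_right, Nat.mul_zero, Nat.choose_zero_right]
  push_cast
  have d1 : (3:ℝ) + (M:ℝ)*2 ≠ 0 := by positivity
  have d2 : (5:ℝ) + (M:ℝ)*2 ≠ 0 := by positivity
  have d3 : (1:ℝ) + (M:ℝ) ≠ 0 := by positivity
  have d4 : (M:ℝ) + 1 ≠ 0 := by positivity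
  have d5 : 2*((M:ℝ)+1) + 3 ≠ 0 := by positivity
  rw [show 2 * ((M:ℝ) + 1) - 2 * 0 + 3 = 2*(M:ℝ)+5 by ring,
      show 2 * ((M:ℝ) + 1) - 2 * 1 + 3 = 2*(M:ℝ)+3 by ring,
      show 2 * ((M:ℝ) + 1) + 3 = 2*(M:ℝ)+5 by ring]
  have d1 : 2*(M:ℝ)+5 ≠ 0 := by positivity
  have d2 : 2*(M:ℝ)+3 ≠ 0 := by positivity
  have d3 : (M:ℝ) + 1 ≠ 0 := by positivity
  field_simp
  ring


private lemma perterm (m k : ℕ) (h : k ≤ m) :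
    ((m:ℝ)+1) * (((2*m+3).choose (2*k) : ℝ) / (((m+1).choose k : ℕ) : ℝ))
      = (2*(m:ℝ)+3) * (((2*m+1).choose (2*k) : ℝ) / ((m.choose k : ℕ) : ℝ))
        + (2*(m:ℝ)+3) *
            ((2*(k:ℝ) - (m:ℝ) - 2) / (2*(m:ℝ) - 2*(k:ℝ) + 3)
              * (((2*m+1).choose (2*k) : ℝ) / ((m.choose k : ℕ) : ℝ))) := by
  obtain ⟨j, rfl⟩ : ∃ j, m = k + j := ⟨m - k, by omega⟩
  have hp := termRel k j
  have hB : (((k+j).choose k : ℕ) : ℝ) ≠ 0 := chooseNe (by omega)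
  have hD : (((k+j+1).choose k : ℕ) : ℝ) ≠ 0 := chooseNe (by omega)
  have h1 : (2*(j:ℝ)+3) ≠ 0 := by positivity
  push_cast at hp ⊢
  rw [show 2*((k:ℝ)+(j:ℝ)) - 2*(k:ℝ) + 3 = 2*(j:ℝ)+3 by ring]
  field_simp
  linear_combination ((k:ℝ)+(j:ℝ)+1) * hp

private lemma keyStep (m : ℕ) :
    ((m:ℝ)+1) * ∑ k ∈ range (m+2), (((2*m+3).choose (2*k) : ℝ) / (((m+1).choose k : ℕ) : ℝ))
      = (2*(m:ℝ)+3) * ∑ k ∈ range (m+1),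
            (((2*m+1).choose (2*k) : ℝ) / ((m.choose k : ℕ) : ℝ)) + ((m:ℝ)+1) := by
  have hlast : (((2*m+3).choose (2*(m+1)) : ℝ)) / (((m+1).choose (m+1) : ℕ) : ℝ)
      = 2*(m:ℝ)+3 := by
    rw [Nat.choose_self, show 2*(m+1) = 2*m+3 - 1 by omega,
        Nat.choose_symm (by omega), Nat.choose_one_right]
    push_cast; ring
  have hs : ((m:ℝ)+1) * ∑ k ∈ range (m+1),
        (((2*m+3).choose (2*k) : ℝ) / (((m+1).choose k : ℕ) : ℝ))
      = (2*(m:ℝ)+3) * (∑ k ∈ range (m+1), (((2*m+1).choose (2*k) : ℝ) / ((m.choose k : ℕ) : ℝ)))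
        + (2*(m:ℝ)+3) * (∑ k ∈ range (m+1),
            (2*(k:ℝ) - (m:ℝ) - 2) / (2*(m:ℝ) - 2*(k:ℝ) + 3)
              * (((2*m+1).choose (2*k) : ℝ) / ((m.choose k : ℕ) : ℝ))) := by
    rw [Finset.mul_sum, Finset.mul_sum, Finset.mul_sum, ← Finset.sum_add_distrib]
    refine Finset.sum_congr rfl fun k hk => ?_
    exact perterm m k (by simp only [mem_range] at hk; omega)
  rw [Finset.sum_range_succ, mul_add, hlast, hs, sumC m]
  have h2 : (2*(m:ℝ)+3) ≠ 0 := by positivity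
  field_simp
  ring

/-- The sequence defined by `a 1 = 1` and `a n = (2n-1)·a (n-1) + (n-1)!` equals
`(n-1)! Σ_{k=0}^{n-1} C(2n-1,2k)/C(n-1,k)`. -/
theorem A087547_recursion_formula (a : ℕ → ℕ) (h1 : a 1 = 1)
    (hrec : ∀ n, 2 ≤ n → a n = (2 * n - 1) * a (n - 1) + (n - 1).factorial)
    (n : ℕ) (hn : 1 ≤ n) :
    (a n : ℝ) =
      ((n - 1).factorial : ℝ) *
        ∑ k ∈ Finset.range n, (((2 * n - 1).choose (2 * k) : ℝ)) / ((n - 1).choose k) := by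
  induction n, hn using Nat.le_induction with
  | base => norm_num [h1]
  | succ n hn ih =>
    obtain ⟨m, rfl⟩ : ∃ m, n = m + 1 := ⟨n - 1, by omega⟩
    rw [hrec (m+1+1) (by omega), show m+1+1-1 = m+1 by omega,
        show 2*(m+1+1)-1 = 2*m+3 by omega]
    rw [show m+1-1 = m by omega, show 2*(m+1)-1 = 2*m+1 by omega] at ih
    push_cast [ih, Nat.factorial_succ]
    linear_combination (-(m.factorial : ℝ)) * keyStep m
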